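/- arXiv:1510.04121 — 4 statements merged into one kernel-verified Lean document; each statement's English description precedes it below -/
import Mathlib

section
/- Let β > 2 be a rational non-integer, D = {0,1,…,⌈β⌉−1}, min = 0, max = (⌈β⌉−1)/(β−1), and X_d = [(min+d)/β, (max+d)/β) for d ∈ D. Then: (i) X_d ∩ X_{d+1} ≠ ∅ for d < ⌈β⌉−1; (ii) X_d ∩ X_{d+2} = ∅ for d < ⌈β⌉−2; (iii) [min, max) = ⋃_{d∈D} X_d. -/
/-- `max = (⌈β⌉ - 1)/(β - 1)` for the β-expansion PAM. -/
noncomputable def betaMax (β : ℝ) : ℝ := ((⌈β⌉ : ℝ) - 1) / (β - 1)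

/-- The interval `X_d = [(0 + d)/β, (max + d)/β)`. -/
noncomputable def betaInterval (β : ℝ) (d : ℕ) : Set ℝ :=
  Set.Ico ((d : ℝ) / β) ((betaMax β + d) / β)

/-- For rational non-integer β > 2: consecutive intervals X_d, X_{d+1} overlap,
intervals X_d, X_{d+2} are disjoint, and the X_d, d ∈ D, cover [0, max). -/
theorem betaIntervals_overlap_disjoint_cover
    (q : ℚ) (hq2 : 2 < q) (hqni : q.den ≠ 1) (β : ℝ) (hβ : β = (q : ℝ)) :
    (∀ d : ℕ, (d : ℤ) < ⌈β⌉ - 1 →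
        (betaInterval β d ∩ betaInterval β (d + 1)).Nonempty) ∧
    (∀ d : ℕ, (d : ℤ) < ⌈β⌉ - 2 →
        betaInterval β d ∩ betaInterval β (d + 2) = ∅) ∧
    Set.Ico (0 : ℝ) (betaMax β) = ⋃ d ∈ Finset.range (⌈β⌉.toNat), betaInterval β d := by
  have hb2 : (2:ℝ) < β := by rw [hβ]; exact_mod_cast hq2
  have hb0 : (0:ℝ) < β := by linarith
  have hb1 : (0:ℝ) < β - 1 := by linarith
  have hceil : ⌈β⌉ = ⌈q⌉ := by rw [hβ]; exact Rat.ceil_cast q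
  have hqlt : q < (⌈q⌉ : ℚ) := by
    refine lt_of_le_of_ne (Int.le_ceil q) (fun h => hqni ?_)
    rw [h]; exact Rat.den_intCast _
  have hblt : β < ((⌈β⌉ : ℤ) : ℝ) := by
    rw [hceil, hβ]; exact_mod_cast hqlt
  have hn3 : (3:ℤ) ≤ ⌈β⌉ := by
    have : (2:ℤ) < ⌈β⌉ := by
      rw [hceil]; exact Int.lt_ceil.mpr (by exact_mod_cast hq2)
    omega
  have hN3 : (3:ℝ) ≤ ((⌈β⌉ : ℤ) : ℝ) := by exact_mod_cast hn3
  have hNlt : ((⌈β⌉ : ℤ) : ℝ) < β + 1 := Int.ceil_lt_add_one β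
  have hMdef : betaMax β = (((⌈β⌉ : ℤ) : ℝ) - 1) / (β - 1) := rfl
  have hM1 : 1 < betaMax β := by
    rw [hMdef, lt_div_iff₀ hb1]; linarith
  have hM2 : betaMax β < 2 := by
    rw [hMdef, div_lt_iff₀ hb1]; linarith
  have hMkey : (betaMax β + (((⌈β⌉ : ℤ) : ℝ) - 1)) / β = betaMax β := by
    rw [hMdef]; field_simp; ring
  refine ⟨?_, ?_, ?_⟩
  · -- overlap
    intro d hd
    refine ⟨((d:ℝ) + 1) / β, ⟨?_, ?_⟩, ?_, ?_⟩
    · exact (div_le_div_iff_of_pos_right hb0).mpr (by linarith)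
    · exact (div_lt_div_iff_of_pos_right hb0).mpr (by linarith)
    · push_cast; exact le_refl _
    · push_cast; exact (div_lt_div_iff_of_pos_right hb0).mpr (by linarith)
  · -- disjoint
    intro d _
    ext x
    simp only [betaInterval, Set.mem_inter_iff, Set.mem_Ico, Set.mem_empty_iff_false,
      iff_false, not_and]
    push_cast
    rintro ⟨h1, h2⟩ h3
    have h5 : ((d:ℝ) + 2) / β < (betaMax β + d) / β := lt_of_le_of_lt h3 h2
    rw [div_lt_div_iff_of_pos_right hb0] at h5
    linarith
  · -- cover
    have hmn : ((⌈β⌉.toNat : ℕ) : ℝ) = ((⌈β⌉ : ℤ) : ℝ) := by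
      have : ((⌈β⌉.toNat : ℕ) : ℤ) = ⌈β⌉ := Int.toNat_of_nonneg (by omega)
      exact_mod_cast this
    have hm3 : 3 ≤ ⌈β⌉.toNat := by omega
    ext x
    simp only [Set.mem_Ico, Set.mem_iUnion, Finset.mem_range, betaInterval]
    constructor
    · rintro ⟨hx0, hxM⟩
      by_cases hcase : (((⌈β⌉.toNat : ℕ) : ℝ) - 1) / β ≤ x
      · refine ⟨⌈β⌉.toNat - 1, by omega, ?_, ?_⟩
        · rw [Nat.cast_sub (by omega)]; push_cast; exact hcase
        · rw [Nat.cast_sub (by omega)]; push_cast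
          rw [hmn, hMkey]; exact hxM
      · push_neg at hcase
        have hfl0 : 0 ≤ ⌊β * x⌋ := Int.floor_nonneg.mpr (mul_nonneg hb0.le hx0)
        have hc : ((⌊β * x⌋.toNat : ℕ) : ℝ) = ((⌊β * x⌋ : ℤ) : ℝ) := by
          exact_mod_cast congrArg (Int.cast : ℤ → ℝ) (Int.toNat_of_nonneg hfl0)
        refine ⟨⌊β * x⌋.toNat, ?_, ?_, ?_⟩
        · have hlt : β * x < ((⌈β⌉.toNat : ℕ) : ℝ) - 1 := by
            rw [lt_div_iff₀ hb0] at hcase; linarith [hcase]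
          have : ((⌊β * x⌋ : ℤ) : ℝ) < ((⌈β⌉.toNat : ℕ) : ℝ) - 1 :=
            lt_of_le_of_lt (Int.floor_le _) hlt
          have h' : ⌊β * x⌋ < ((⌈β⌉.toNat : ℕ) : ℤ) - 1 := by exact_mod_cast this
          omega
        · rw [hc, div_le_iff₀ hb0]
          calc ((⌊β * x⌋ : ℤ) : ℝ) ≤ β * x := Int.floor_le _
            _ = x * β := by ring
        · rw [hc, lt_div_iff₀ hb0]
          have := Int.lt_floor_add_one (β * x)
          nlinarith
    · rintro ⟨d, hd, hx1, hx2⟩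
      constructor
      · exact le_trans (by positivity) hx1
      · have hdle : (d:ℝ) ≤ ((⌈β⌉ : ℤ) : ℝ) - 1 := by
          have h1 : (d:ℤ) ≤ ⌈β⌉ - 1 := by omega
          have h2 : ((d:ℤ) : ℝ) ≤ (((⌈β⌉ : ℤ) : ℝ)) - 1 := by exact_mod_cast h1
          exact_mod_cast h2
        have hle : (betaMax β + (d:ℝ)) / β ≤ (betaMax β + (((⌈β⌉ : ℤ) : ℝ) - 1)) / β := by
          gcongr
        rw [hMkey] at hle
        exact lt_of_lt_of_le hx2 hle
end

section
/- Define Δ_1 = 1 and Δ_{i+1} = 2^{Δ_i} + Δ_i for i ≥ 1, and let α = Σ_{i=1}^∞ 2^{-Δ_i}. Then for all integers n ≥ 0, the fractional part {2^n · n · α} is strictly less than 1/2. In particular the sequence ({2^n n α})_{n≥0} is not dense in [0,1]. -/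
/-- `Delta i` is Δ_{i+1} of the paper: Δ_1 = 1, Δ_{i+1} = 2^{Δ_i} + Δ_i. -/
def Delta : ℕ → ℕ
  | 0 => 1
  | i + 1 => 2 ^ Delta i + Delta i

/-- `α = Σ_{i=1}^∞ 2^{-Δ_i}`. -/
noncomputable def alphaA034797 : ℝ := ∑' i : ℕ, ((2 : ℝ) ^ Delta i)⁻¹

lemma delta_pos (i : ℕ) : 1 ≤ Delta i := by
  induction i with
  | zero => simp [Delta]
  | succ n ih => have : 1 ≤ 2 ^ Delta n := Nat.one_le_two_pow; simp [Delta]; omega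

lemma delta_lt_succ (i : ℕ) : Delta i < Delta (i + 1) := by
  have : 1 ≤ 2 ^ Delta i := Nat.one_le_two_pow
  show Delta i < 2 ^ Delta i + Delta i
  omega

lemma delta_ge (i : ℕ) : i + 1 ≤ Delta i := by
  induction i with
  | zero => simp [Delta]
  | succ n ih => have := delta_lt_succ n; omega

lemma delta_add_le (a i : ℕ) : Delta a + i ≤ Delta (a + i) := by
  induction i with
  | zero => simp
  | succ n ih =>
    have := delta_lt_succ (a + n)
    have e : a + (n + 1) = a + n + 1 := rfl
    rw [e]
    omega

lemma delta_key : ∀ j, ∀ m, 1 ≤ m → m ≤ Delta j → (Delta j - m) % 2 ^ m < 2 ^ (m - 1) := by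
  intro j
  induction j with
  | zero =>
    intro m h1 h2
    simp only [Delta] at h2
    interval_cases m
    simp [Delta]
  | succ j ih =>
    intro m h1 h2
    show (2 ^ Delta j + Delta j - m) % 2 ^ m < 2 ^ (m - 1)
    rcases le_or_gt m (Delta j) with h | h
    · have e : 2 ^ (Delta j - m) * 2 ^ m = 2 ^ Delta j := by
        rw [← pow_add]; congr 1; omega
      have e2 : 2 ^ Delta j + Delta j - m = (Delta j - m) + 2 ^ (Delta j - m) * 2 ^ m := by
        rw [e]; omega
      rw [e2, Nat.add_mul_mod_self_right]
      exact ih m h1 h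
    · have h0 : 1 ≤ 2 ^ Delta j := Nat.one_le_two_pow
      have hle : 2 ^ Delta j ≤ 2 ^ (m - 1) := Nat.pow_le_pow_right (by norm_num) (by omega)
      calc (2 ^ Delta j + Delta j - m) % 2 ^ m ≤ 2 ^ Delta j + Delta j - m := Nat.mod_le _ _
        _ < 2 ^ (m - 1) := by omega

lemma summable_f : Summable (fun i : ℕ => ((2 : ℝ) ^ Delta i)⁻¹) := by
  apply Summable.of_nonneg_of_le (fun i => by positivity) (fun i => ?_) summable_geometric_two
  rw [one_div, inv_pow]
  exact inv_anti₀ (by positivity)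
    (pow_le_pow_right₀ (by norm_num) (by have := delta_ge i; omega))

-- key natural number inequality for the tail bound
lemma tail_nat_bound (n m : ℕ) (hn : 1 ≤ n) (hm : 1 ≤ m) :
    n * 2 ^ (n + 1) * 2 ^ m < 2 ^ (2 ^ (n + m) + (n + m)) := by
  set d := n + m with hd
  have h1 : n * 2 ^ (n + 1) * 2 ^ m = n * 2 ^ (d + 1) := by
    rw [mul_assoc, ← pow_add]; congr 2; omega
  have hd1 : 1 ≤ d := by omega
  have h2 : d ≤ 2 ^ (d - 1) := by
    have := Nat.lt_two_pow_self (n := d - 1); omega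
  have h3 : n * 2 ^ (d + 1) < d * 2 ^ (d + 1) := by
    have hp : 0 < 2 ^ (d + 1) := by positivity
    exact Nat.mul_lt_mul_of_lt_of_le (by omega) (le_refl _) hp
  have h4 : d * 2 ^ (d + 1) ≤ 2 ^ (d - 1) * 2 ^ (d + 1) :=
    Nat.mul_le_mul_right _ h2
  have h5 : 2 ^ (d - 1) * 2 ^ (d + 1) = 2 ^ (2 * d) := by rw [← pow_add]; congr 1; omega
  have h6 : 2 * d ≤ 2 ^ d := by
    calc 2 * d ≤ 2 * 2 ^ (d - 1) := by omega
      _ = 2 ^ d := by rw [← pow_succ']; congr 1; omega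
  have h7 : 2 ^ (2 * d) ≤ 2 ^ (2 ^ d + d) := Nat.pow_le_pow_right (by norm_num) (by omega)
  omega

lemma main_fract (n : ℕ) : Int.fract ((2 : ℝ) ^ n * n * alphaA034797) < 1 / 2 := by
  rcases Nat.eq_zero_or_pos n with rfl | hn
  · norm_num [Int.fract_zero]
  set f : ℕ → ℝ := fun i => ((2 : ℝ) ^ Delta i)⁻¹ with hf
  have hsum : Summable f := summable_f
  have hex : ∃ k, n < Delta k := ⟨n, by have := delta_ge n; omega⟩
  set k := Nat.find hex with hkdef
  have hk : n < Delta k := Nat.find_spec hex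
  have hmin : ∀ i, i < k → Delta i ≤ n := fun i hi => by
    have := Nat.find_min hex hi; omega
  set m := Delta k - n with hm
  have hm1 : 1 ≤ m := by omega
  have hdk : Delta k = n + m := by omega
  -- decompositions of alpha
  have A1 : ∑ i ∈ Finset.range k, f i + ∑' i, f (i + k) = alphaA034797 :=
    Summable.sum_add_tsum_nat_add k hsum
  have A2 : ∑ i ∈ Finset.range (k + 1), f i + ∑' i, f (i + (k + 1)) = alphaA034797 :=
    Summable.sum_add_tsum_nat_add (k + 1) hsum
  have Asplit : ∑' i, f (i + k) = f k + ∑' i, f (i + (k + 1)) := by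
    rw [Finset.sum_range_succ] at A2; linarith
  -- integer head
  set N : ℕ := ∑ i ∈ Finset.range k, n * 2 ^ (n - Delta i) with hN
  have hhead : (N : ℝ) = (2 : ℝ) ^ n * n * ∑ i ∈ Finset.range k, f i := by
    rw [hN, Finset.mul_sum]
    push_cast
    apply Finset.sum_congr rfl
    intro i hi
    have hle : Delta i ≤ n := hmin i (Finset.mem_range.mp hi)
    have : (2 : ℝ) ^ n = 2 ^ (n - Delta i) * 2 ^ Delta i := by
      rw [← pow_add]; congr 1; omega
    rw [hf]
    field_simp [this]
    exact this.symm
  set S : ℝ := ∑' i, f (i + (k + 1)) with hS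
  set R : ℝ := (2 : ℝ) ^ n * n * S with hR
  set A : ℝ := (2 : ℝ) ^ n * n * f k with hA
  have hdecomp : (2 : ℝ) ^ n * n * alphaA034797 = (N : ℝ) + (A + R) := by
    rw [hhead, hA, hR, ← A1, Asplit]; ring
  rw [hdecomp, Int.fract_natCast_add]
  -- fract A
  set r : ℕ := n % 2 ^ m with hr
  have hAval : A = (n / 2 ^ m : ℕ) + (r : ℝ) / 2 ^ m := by
    have h2 : (2 : ℝ) ^ n * f k = ((2 : ℝ) ^ m)⁻¹ := by
      simp only [hf]
      have hpk : (2 : ℝ) ^ Delta k = 2 ^ n * 2 ^ m := by rw [← pow_add, hdk]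
      rw [hpk]
      field_simp
    have h3 : (n : ℝ) = (n / 2 ^ m : ℕ) * 2 ^ m + (r : ℝ) := by
      exact_mod_cast (Nat.div_add_mod' n (2 ^ m)).symm
    rw [hA, mul_comm ((2:ℝ)^n) (n:ℝ), mul_assoc, h2, h3]
    field_simp
  have hrlt : (r : ℝ) / 2 ^ m < 1 := by
    rw [div_lt_one (by positivity)]
    exact_mod_cast Nat.mod_lt n (by positivity)
  have hfractA : Int.fract A = (r : ℝ) / 2 ^ m := by
    rw [hAval, Int.fract_natCast_add, Int.fract_eq_self.mpr ⟨by positivity, hrlt⟩]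
  -- crux bound on r
  have hkey : r < 2 ^ (m - 1) := by
    have := delta_key k m hm1 (by omega)
    have hdn : Delta k - m = n := by omega
    rwa [hdn] at this
  have hfA : Int.fract A ≤ 1 / 2 - ((2 : ℝ) ^ m)⁻¹ := by
    rw [hfractA]
    have hr' : (r : ℝ) ≤ 2 ^ (m - 1) - 1 := by
      have h1 : r + 1 ≤ 2 ^ (m - 1) := hkey
      have h2 : ((r : ℝ) + 1) ≤ 2 ^ (m - 1) := by exact_mod_cast h1
      linarith
    have h2m : (2 : ℝ) ^ m = 2 ^ (m - 1) * 2 := by rw [← pow_succ]; congr 1; omega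
    rw [div_le_iff₀ (by positivity), h2m]
    have hpos : (0:ℝ) < 2 ^ (m-1) := by positivity
    field_simp
    nlinarith [hpos]
  -- bound R
  have hSnn : 0 ≤ S := by
    rw [hS]; apply tsum_nonneg; intro i; positivity
  have hRnn : 0 ≤ R := by rw [hR]; positivity
  have hSle : S ≤ 2 * ((2 : ℝ) ^ Delta (k + 1))⁻¹ := by
    have hsum2 : Summable (fun i : ℕ => f (i + (k + 1))) := (summable_nat_add_iff (k+1)).mpr hsum
    have hsum3 : Summable (fun i : ℕ => ((2 : ℝ) ^ Delta (k + 1))⁻¹ * (1 / 2) ^ i) :=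
      summable_geometric_two.mul_left _
    have hterm : ∀ i : ℕ, f (i + (k + 1)) ≤ ((2 : ℝ) ^ Delta (k + 1))⁻¹ * (1 / 2) ^ i := by
      intro i
      have hd : Delta (k + 1) + i ≤ Delta (i + (k + 1)) := by
        have := delta_add_le (k + 1) i
        rwa [add_comm i (k+1)]
      rw [hf]
      have hrhs : ((2 : ℝ) ^ Delta (k + 1))⁻¹ * (1 / 2) ^ i = ((2 : ℝ) ^ (Delta (k+1) + i))⁻¹ := by
        rw [pow_add, one_div, inv_pow, mul_inv]
      rw [hrhs]
      apply inv_anti₀ (by positivity)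
      exact pow_le_pow_right₀ (by norm_num) hd
    calc S ≤ ∑' i, ((2 : ℝ) ^ Delta (k + 1))⁻¹ * (1 / 2) ^ i :=
          Summable.tsum_le_tsum hterm hsum2 hsum3
      _ = ((2 : ℝ) ^ Delta (k + 1))⁻¹ * 2 := by rw [tsum_mul_left, tsum_geometric_two]
      _ = 2 * ((2 : ℝ) ^ Delta (k + 1))⁻¹ := by ring
  have hRlt : R < ((2 : ℝ) ^ m)⁻¹ := by
    have hnat := tail_nat_bound n m hn hm1
    have hD1 : Delta (k + 1) = 2 ^ (n + m) + (n + m) := by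
      show 2 ^ Delta k + Delta k = _
      rw [hdk]
    have hcast : (n : ℝ) * 2 ^ (n + 1) * 2 ^ m < 2 ^ Delta (k + 1) := by
      rw [hD1]; exact_mod_cast hnat
    have h1 : R ≤ (2 : ℝ) ^ n * n * (2 * ((2 : ℝ) ^ Delta (k + 1))⁻¹) := by
      rw [hR]
      apply mul_le_mul_of_nonneg_left hSle (by positivity)
    have h2 : (2 : ℝ) ^ n * n * (2 * ((2 : ℝ) ^ Delta (k + 1))⁻¹) < ((2 : ℝ) ^ m)⁻¹ := by
      have key : (n : ℝ) * (2 ^ n * 2) * 2 ^ m < 2 ^ Delta (k + 1) := by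
        rw [← pow_succ]; exact hcast
      rw [← sub_pos]
      have e : ((2:ℝ) ^ m)⁻¹ - 2 ^ n * n * (2 * ((2 : ℝ) ^ Delta (k + 1))⁻¹)
          = (2 ^ Delta (k + 1) - (n : ℝ) * (2 ^ n * 2) * 2 ^ m)
            / (2 ^ Delta (k + 1) * 2 ^ m) := by
        field_simp
      rw [e]
      exact div_pos (by linarith) (by positivity)
    linarith
  -- combine
  have hfr : Int.fract (A + R) ≤ Int.fract A + R := by
    have hfloor : (0 : ℝ) ≤ (⌊R⌋ : ℝ) := by
      exact_mod_cast Int.floor_nonneg.mpr hRnn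
    have hfR : Int.fract R ≤ R := by
      rw [← Int.self_sub_floor R]; linarith
    calc Int.fract (A + R) ≤ Int.fract A + Int.fract R := Int.fract_add_le A R
      _ ≤ Int.fract A + R := by linarith
  calc Int.fract (A + R) ≤ Int.fract A + R := hfr
    _ < (1 / 2 - ((2:ℝ) ^ m)⁻¹) + ((2:ℝ) ^ m)⁻¹ := by
        apply add_lt_add_of_le_of_lt hfA hRlt
    _ = 1 / 2 := by ring

/-- For all `n ≥ 0`, `{2^n n α}` < 1/2; in particular the sequence of these
fractional parts is not dense in `[0,1]`. -/
theorem fract_two_pow_mul_alpha_lt_half :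
    (∀ n : ℕ, Int.fract ((2 : ℝ) ^ n * n * alphaA034797) < 1 / 2) ∧
    ¬ Set.Icc (0 : ℝ) 1 ⊆
      closure (Set.range fun n : ℕ => Int.fract ((2 : ℝ) ^ n * n * alphaA034797)) := by
  refine ⟨main_fract, fun h => ?_⟩
  have h34 : (3 / 4 : ℝ) ∈ Set.Icc (0 : ℝ) 1 := by norm_num
  have hcl : closure (Set.range fun n : ℕ => Int.fract ((2 : ℝ) ^ n * n * alphaA034797)) ⊆
      Set.Iic (1 / 2 : ℝ) := by
    apply closure_minimal _ isClosed_Iic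
    rintro x ⟨n, rfl⟩
    exact (main_fract n).le
  have := hcl (h h34)
  norm_num at this
end

section
/- Define Δ_1 = 1, Δ_{i+1} = 2^{Δ_i} + Δ_i. For k ≥ 2 and Δ_k − Δ_{k−1} ≤ n ≤ Δ_k, writing m = n − 2^{Δ_{k−1}} (so 0 ≤ m ≤ Δ_{k−1}), the fractional parts satisfy {2^n n / 2^{Δ_k}} = {2^m m / 2^{Δ_{k−1}}}. -/
/-- For `k ≥ 2` and `Δ_k − Δ_{k−1} ≤ n ≤ Δ_k`, with `m = n − 2^{Δ_{k−1}}`,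
`{2^n n / 2^{Δ_k}} = {2^m m / 2^{Δ_{k−1}}}`. -/
theorem fract_reduction_step
    (k : ℕ) (hk : 2 ≤ k) (n : ℕ)
    (hn1 : Delta (k - 1) - Delta (k - 2) ≤ n) (hn2 : n ≤ Delta (k - 1)) :
    Int.fract ((2 : ℝ) ^ n * n / 2 ^ Delta (k - 1)) =
      Int.fract ((2 : ℝ) ^ (n - 2 ^ Delta (k - 2)) * (n - 2 ^ Delta (k - 2) : ℕ)
        / 2 ^ Delta (k - 2)) := by
  obtain ⟨j, rfl⟩ : ∃ j, k = j + 2 := ⟨k - 2, by omega⟩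
  have e1 : j + 2 - 1 = j + 1 := rfl
  have e2 : j + 2 - 2 = j := rfl
  rw [e1, e2]
  have hn1' : Delta (j + 1) - Delta j ≤ n := hn1
  have hn2' : n ≤ Delta (j + 1) := hn2
  have hD : Delta (j + 1) = 2 ^ Delta j + Delta j := rfl
  have h2 : 2 ^ Delta j ≤ n := by omega
  set m := n - 2 ^ Delta j with hm
  have hn : n = m + 2 ^ Delta j := by omega
  have key : (2 : ℝ) ^ n * n / 2 ^ Delta (j + 1)
      = 2 ^ m * m / 2 ^ Delta j + ((2 : ℤ) ^ m : ℤ) := by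
    rw [hD, hn]
    push_cast
    rw [pow_add, pow_add]
    have h1 : (2 : ℝ) ^ Delta j ≠ 0 := by positivity
    have h2' : (2 : ℝ) ^ (2 ^ Delta j) ≠ 0 := by positivity
    field_simp
  rw [key, Int.fract_add_intCast]
end

section
/- Define Δ_1 = 1, Δ_{k} = 2^{Δ_{k−1}} + Δ_{k−1}. For k ≥ 2 and Δ_{k−1} ≤ n ≤ Δ_k − Δ_{k−1} − 1, we have 2^n n / 2^{Δ_k} ≤ 1/2 − 1/2^{Δ_{k−1}+1} < 1/2. -/
/-- For `k ≥ 2` and `Δ_{k−1} ≤ n ≤ Δ_k − Δ_{k−1} − 1`,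
`2^n n / 2^{Δ_k} ≤ 1/2 − 1/2^{Δ_{k−1}+1} < 1/2`. -/
theorem two_pow_mul_div_le_half
    (k : ℕ) (hk : 2 ≤ k) (n : ℕ)
    (hn1 : Delta (k - 2) ≤ n) (hn2 : n ≤ Delta (k - 1) - Delta (k - 2) - 1) :
    (2 : ℝ) ^ n * n / 2 ^ Delta (k - 1)
        ≤ 1 / 2 - 1 / 2 ^ (Delta (k - 2) + 1) ∧
      (1 / 2 - 1 / 2 ^ (Delta (k - 2) + 1) : ℝ) < 1 / 2 := by
  set m := Delta (k - 2) with hm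
  have hk1 : k - 1 = (k - 2) + 1 := by omega
  have hD : Delta (k - 1) = 2 ^ m + m := by rw [hk1]; rfl
  have hmn : n ≤ 2 ^ m - 1 := by
    have h1 : 1 ≤ 2 ^ m := Nat.one_le_two_pow
    omega
  constructor
  · rw [hD, div_le_iff₀ (by positivity)]
    have key : (2 : ℝ) ^ n * n ≤ 2 ^ (2 ^ m - 1) * ((2 : ℝ) ^ m - 1) := by
      have h1 : (2 : ℝ) ^ n ≤ 2 ^ (2 ^ m - 1) := by
        apply pow_le_pow_right₀ (by norm_num) hmn
      have h2 : (n : ℝ) ≤ (2 : ℝ) ^ m - 1 := by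
        have : ((2 ^ m - 1 : ℕ) : ℝ) = (2 : ℝ) ^ m - 1 := by
          push_cast [Nat.one_le_two_pow (n := m)]; ring
        calc (n : ℝ) ≤ ((2 ^ m - 1 : ℕ) : ℝ) := by exact_mod_cast hmn
          _ = (2 : ℝ) ^ m - 1 := this
      exact mul_le_mul h1 h2 (by positivity) (by positivity)
    refine key.trans_eq ?_
    have h1 : 1 ≤ 2 ^ m := Nat.one_le_two_pow
    have e : 2 ^ m + m = (2 ^ m - 1) + (m + 1) := by omega
    rw [e, pow_add]
    have hpos : (0 : ℝ) < 2 ^ (m + 1) := by positivity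
    field_simp
    ring
  · have : (0 : ℝ) < 1 / 2 ^ (m + 1) := by positivity
    linarith
end
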